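/- arXiv:2101.04671 — 2 statements merged into one kernel-verified Lean document; each statement's English description precedes it below -/
import Mathlib

section
/- The pair (Δ, √V) is a canonical pair; that is, for every λ ∈ ℝ one has E[exp(λ·Δ − (λ²/2)·V)] ≤ 1. -/
open MeasureTheory ProbabilityTheory Real ENNReal Finset

variable {Ω 𝒵 : Type*} [MeasurableSpace Ω] [MeasurableSpace 𝒵]

/-- The sample `S = (Z_1, …, Z_n)` viewed as a map `Ω → 𝒵ⁿ`. -/
def sample (n : ℕ) (Z : Fin n → Ω → 𝒵) (ω : Ω) : Fin n → 𝒵 := fun i => Z i ω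

/-- `S^{(k)}`: the sample with its `k`-th coordinate replaced by `Z'_k`. -/
def sampleRep (n : ℕ) (Z Z' : Fin n → Ω → 𝒵) (k : Fin n) (ω : Ω) : Fin n → 𝒵 :=
  Function.update (sample n Z ω) k (Z' k ω)

/-- The σ-algebra generated by `Z_1, …, Z_m` (i.e. by the `Z_i` with `i < m`). -/
def filt (n : ℕ) (Z : Fin n → Ω → 𝒵) (m : ℕ) : MeasurableSpace Ω :=
  ⨆ i : Fin n, ⨆ _ : (i : ℕ) < m, MeasurableSpace.comap (Z i) inferInstance

/-- The gap `Δ = f(S) − E[f(S)]`. -/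
noncomputable def gap (P : Measure Ω) (n : ℕ) (Z : Fin n → Ω → 𝒵)
    (f : (Fin n → 𝒵) → ℝ) (ω : Ω) : ℝ :=
  f (sample n Z ω) - ∫ ω', f (sample n Z ω') ∂P

/-- The semi-empirical variance estimator
`V = Σ_{k=1}^n E[(f(S) − f(S^{(k)}))² | Z_1, …, Z_k]`. -/
noncomputable def varEst (P : Measure Ω) (n : ℕ) (Z Z' : Fin n → Ω → 𝒵)
    (f : (Fin n → 𝒵) → ℝ) (ω : Ω) : ℝ :=
  ∑ k : Fin n,
    (P[fun ω' => (f (sample n Z ω') - f (sampleRep n Z Z' k ω')) ^ 2 |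
      filt n Z (k + 1)]) ω

/-!
Realise `S` and its copy `S'` on one product space. The Doob martingale
`M_m = E[f(S) | Z_1, …, Z_m]` has increments `M_{k+1} - M_k = E[d_k | Z_1, …, Z_{k+1}]` with
`d_k = f(S) - f(S⁽ᵏ⁾)`, because exchanging `Z_k` and `Z'_k` preserves the law. Jensen gives
`exp(λ (M_{k+1} - M_k) - λ²/2 V_k) ≤ E[exp(λ d_k - λ²/2 d_k²) | Z_1, …, Z_{k+1}]`, and the same
exchange maps `d_k` to `-d_k` while fixing everything measurable in `Z_1, …, Z_k`, so
`cosh x ≤ exp(x²/2)` makes `exp(λ (M_k - M_0) - λ²/2 Σ_{j<k} V_j)` a supermartingale started at `1`.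
-/

namespace MeasureTheory.MeasurePreserving

variable {X Y : Type*} [MeasurableSpace X] [MeasurableSpace Y] {μ : Measure X} {ν : Measure Y}
  {T : X → Y} {g : Y → ℝ}

lemma integral_comp_of_aestronglyMeasurable (hT : MeasurePreserving T μ ν)
    (hg : AEStronglyMeasurable g ν) : ∫ x, g (T x) ∂μ = ∫ y, g y ∂ν := by
  rw [← hT.map_eq] at hg ⊢
  exact (integral_map hT.measurable.aemeasurable hg).symm

lemma setIntegral_preimage (hT : MeasurePreserving T μ ν) (hg : AEStronglyMeasurable g ν)
    {B : Set Y} (hB : MeasurableSet B) : ∫ x in T ⁻¹' B, g (T x) ∂μ = ∫ y in B, g y ∂ν :=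
  (hT.restrict_preimage hB).integral_comp_of_aestronglyMeasurable hg.restrict

end MeasureTheory.MeasurePreserving

section Coordinates

variable {ι : Type*} {μ : ι → Measure 𝒵}

lemma measurable_piecewise_prod [DecidableEq ι] (s : Finset ι) :
    Measurable fun p : (ι → 𝒵) × (ι → 𝒵) => s.piecewise p.1 p.2 := by
  refine measurable_pi_lambda _ fun j => ?_
  by_cases hj : j ∈ s
  · simp only [hj, piecewise_eq_of_mem]; fun_prop
  · simp only [hj, not_false_eq_true, piecewise_eq_of_notMem]; fun_prop

lemma measurePreserving_piecewise [Fintype ι] [DecidableEq ι] [∀ i, IsProbabilityMeasure (μ i)]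
    (s : Finset ι) :
    MeasurePreserving (fun p : (ι → 𝒵) × (ι → 𝒵) => s.piecewise p.1 p.2)
      ((Measure.pi μ).prod (Measure.pi μ)) (Measure.pi μ) := by
  refine ⟨measurable_piecewise_prod s, (Measure.pi_eq fun t ht => ?_).symm⟩
  have hpre : (fun p : (ι → 𝒵) × (ι → 𝒵) => s.piecewise p.1 p.2) ⁻¹' Set.univ.pi t =
      Set.univ.pi (s.piecewise t fun _ => Set.univ) ×ˢ
        Set.univ.pi (s.piecewise (fun _ => Set.univ) t) := by
    ext p
    simp only [Set.mem_preimage, Set.mem_prod, Set.mem_univ_pi, ← forall_and]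
    refine forall_congr' fun j => ?_
    by_cases hj : j ∈ s <;> simp [hj]
  rw [Measure.map_apply (measurable_piecewise_prod s) (.univ_pi ht), hpre, Measure.prod_prod,
    Measure.pi_pi, Measure.pi_pi, ← prod_mul_distrib]
  refine prod_congr rfl fun j _ => ?_
  by_cases hj : j ∈ s <;> simp [hj]

lemma measurePreserving_comp_equiv [Fintype ι] [∀ i, SigmaFinite (μ i)] (e : ι ≃ ι)
    (he : ∀ i, μ (e i) = μ i) :
    MeasurePreserving (fun x : ι → 𝒵 => x ∘ e) (Measure.pi μ) (Measure.pi μ) := by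
  have h := measurePreserving_piCongrLeft (fun i => μ i) e.symm
  rw [show (fun i => μ (e.symm i)) = μ from funext fun i => by rw [← he, e.apply_symm_apply]] at h
  convert h using 1
  ext x i
  simp [MeasurableEquiv.coe_piCongrLeft, Equiv.piCongrLeft_apply]

lemma ae_integrable_piecewise [Fintype ι] [DecidableEq ι] [∀ i, IsProbabilityMeasure (μ i)]
    (s : Finset ι) {H : (ι → 𝒵) → ℝ} (hH : Integrable H (Measure.pi μ)) :
    ∀ᵐ x ∂Measure.pi μ, Integrable (fun y => H (s.piecewise x y)) (Measure.pi μ) :=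
  ((measurePreserving_piecewise s).integrable_comp_of_integrable hH).prod_right_ae

lemma lintegral_lintegral_piecewise [Fintype ι] [DecidableEq ι] [∀ i, IsProbabilityMeasure (μ i)]
    (s : Finset ι) {K : (ι → 𝒵) → ℝ≥0∞} (hK : Measurable K) :
    ∫⁻ x, ∫⁻ y, K (s.piecewise x y) ∂Measure.pi μ ∂Measure.pi μ = ∫⁻ z, K z ∂Measure.pi μ := by
  rw [← (measurePreserving_piecewise s).lintegral_comp hK,
    lintegral_prod (fun p => K (s.piecewise p.1 p.2))
      (hK.comp (measurable_piecewise_prod s)).aemeasurable]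

end Coordinates

section ExpWeight

lemma exp_sub_add_exp_neg_sub_le_two (l t : ℝ) :
    exp (l * t - l ^ 2 / 2 * t ^ 2) + exp (-(l * t) - l ^ 2 / 2 * t ^ 2) ≤ 2 := by
  have hcosh : cosh (l * t) ≤ exp (l ^ 2 / 2 * t ^ 2) := by
    convert cosh_le_exp_half_sq (l * t) using 2; ring
  have hsplit : exp (l * t - l ^ 2 / 2 * t ^ 2) + exp (-(l * t) - l ^ 2 / 2 * t ^ 2) =
      2 * cosh (l * t) * exp (-(l ^ 2 / 2 * t ^ 2)) := by
    rw [cosh_eq, sub_eq_add_neg, sub_eq_add_neg, exp_add, exp_add]; ring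
  calc _ = 2 * cosh (l * t) * exp (-(l ^ 2 / 2 * t ^ 2)) := hsplit
    _ ≤ 2 * exp (l ^ 2 / 2 * t ^ 2) * exp (-(l ^ 2 / 2 * t ^ 2)) := by gcongr
    _ = 2 := by rw [mul_assoc, ← exp_add, add_neg_cancel, exp_zero, mul_one]

variable {X : Type*} [MeasurableSpace X] {ν : Measure X}

/-- Averaging over `σ` replaces the weight by `cosh (l d) * exp (-l² d² / 2) ≤ 1`. -/
lemma lintegral_mul_ofReal_exp_le_of_antisymm {σ : X → X} (hσ : MeasurePreserving σ ν ν)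
    {E : X → ℝ≥0∞} (hE : Measurable E) (hEσ : ∀ x, E (σ x) = E x)
    {d : X → ℝ} (hd : Measurable d) (hdσ : ∀ x, d (σ x) = -d x) (l : ℝ) :
    ∫⁻ x, E x * ENNReal.ofReal (exp (l * d x - l ^ 2 / 2 * d x ^ 2)) ∂ν ≤ ∫⁻ x, E x ∂ν := by
  set w : ℝ → ℝ≥0∞ := fun t => ENNReal.ofReal (exp (l * t - l ^ 2 / 2 * t ^ 2))
  have hw : Measurable w := by fun_prop
  have hflip : ∫⁻ x, E x * w (d x) ∂ν = ∫⁻ x, E x * w (-d x) ∂ν := by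
    rw [← hσ.lintegral_comp (f := fun x => E x * w (d x)) (hE.mul (hw.comp hd))]
    simp only [hEσ, hdσ]
  have hpair : ∀ x, w (d x) + w (-d x) ≤ 2 := fun x => by
    simp only [w, neg_sq, mul_neg]
    rw [← ENNReal.ofReal_add (exp_pos _).le (exp_pos _).le, ← ENNReal.ofReal_ofNat 2]
    exact ENNReal.ofReal_le_ofReal (exp_sub_add_exp_neg_sub_le_two l (d x))
  have htwice : 2 * ∫⁻ x, E x * w (d x) ∂ν ≤ 2 * ∫⁻ x, E x ∂ν := by
    calc 2 * ∫⁻ x, E x * w (d x) ∂ν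
        = ∫⁻ x, E x * (w (d x) + w (-d x)) ∂ν := by
          rw [two_mul]; nth_rewrite 2 [hflip]
          rw [← lintegral_add_left (f := fun x => E x * w (d x)) (hE.mul (hw.comp hd))]
          simp only [mul_add]
      _ ≤ ∫⁻ x, E x * 2 ∂ν := lintegral_mono fun x => by gcongr; exact hpair x
      _ = 2 * ∫⁻ x, E x ∂ν := by
          rw [← lintegral_const_mul' _ _ ENNReal.ofNat_ne_top]; simp only [mul_comm]
  exact (ENNReal.mul_le_mul_iff_right two_ne_zero ENNReal.ofNat_ne_top).mp htwice

lemma ofReal_exp_integral_le_lintegral [IsProbabilityMeasure ν] {d : X → ℝ}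
    (hd : Integrable d ν) (hd2 : Integrable (fun x => d x ^ 2) ν) (l : ℝ) :
    ENNReal.ofReal (exp (l * ∫ x, d x ∂ν - l ^ 2 / 2 * ∫ x, d x ^ 2 ∂ν)) ≤
      ∫⁻ x, ENNReal.ofReal (exp (l * d x - l ^ 2 / 2 * d x ^ 2)) ∂ν := by
  have hψ : Integrable (fun x => l * d x - l ^ 2 / 2 * d x ^ 2) ν :=
    (hd.const_mul l).sub (hd2.const_mul _)
  have hexp : Integrable (fun x => exp (l * d x - l ^ 2 / 2 * d x ^ 2)) ν := by
    refine (integrable_const (exp (1 / 2))).mono' (by fun_prop) (ae_of_all _ fun x => ?_)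
    rw [norm_of_nonneg (exp_pos _).le, exp_le_exp]
    nlinarith [sq_nonneg (l * d x - 1)]
  rw [← ofReal_integral_eq_lintegral_ofReal hexp (ae_of_all _ fun x => (exp_pos _).le),
    ← integral_const_mul, ← integral_const_mul,
    ← integral_sub (hd.const_mul l) (hd2.const_mul _)]
  exact ENNReal.ofReal_le_ofReal <| convexOn_exp.map_integral_le continuousOn_exp isClosed_univ
    (ae_of_all _ fun _ => Set.mem_univ _) hψ hexp

end ExpWeight

section CondAvg

variable {ι : Type*} [DecidableEq ι]

/-- Integrates out the coordinates outside `s`; under a product measure this is the conditional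
expectation given the coordinates in `s` (`condExp_piFinset_ae_eq_condAvg`). -/
noncomputable def condAvg (ν : Measure (ι → 𝒵)) (s : Finset ι) (H : (ι → 𝒵) → ℝ)
    (x : ι → 𝒵) : ℝ :=
  ∫ y, H (s.piecewise x y) ∂ν

variable {ν : Measure (ι → 𝒵)} {s : Finset ι} {H : (ι → 𝒵) → ℝ}

lemma condAvg_congr {x x' : ι → 𝒵} (h : ∀ j ∈ s, x j = x' j) :
    condAvg ν s H x = condAvg ν s H x' := by
  unfold condAvg
  congr 1 with y
  congr 1 with j
  by_cases hj : j ∈ s <;> simp [hj, h]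

lemma condAvg_empty (x : ι → 𝒵) : condAvg ν ∅ H x = ∫ y, H y ∂ν := by
  simp [condAvg]

lemma condAvg_eq_self [IsProbabilityMeasure ν] {x : ι → 𝒵}
    (h : ∀ y, H (s.piecewise x y) = H x) : condAvg ν s H x = H x := by
  simp [condAvg, h]

lemma stronglyMeasurable_condAvg [SFinite ν] (hH : Measurable H) :
    StronglyMeasurable[Filtration.piFinset s] (condAvg ν s H) := by
  have hpw : @Measurable _ _ ((Filtration.piFinset s : MeasurableSpace (ι → 𝒵)).prod
      MeasurableSpace.pi) MeasurableSpace.pi fun p : (ι → 𝒵) × (ι → 𝒵) => s.piecewise p.1 p.2 := by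
    refine @measurable_pi_lambda _ _ _ ((Filtration.piFinset s).prod MeasurableSpace.pi) _ _
      fun j => ?_
    by_cases hj : j ∈ s
    · have hcoord : Measurable[Filtration.piFinset s] fun x : ι → 𝒵 => x j :=
        (measurable_pi_apply (X := fun _ : s => 𝒵) ⟨j, hj⟩).comp (comap_measurable _)
      simp only [hj, piecewise_eq_of_mem]
      exact hcoord.comp measurable_fst
    · simp only [hj, not_false_eq_true, piecewise_eq_of_notMem]
      exact (measurable_pi_apply j).comp measurable_snd
  exact @StronglyMeasurable.integral_prod_right' _ _ _ (Filtration.piFinset s) _ ν _ _ _ _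
    (hH.comp hpw).stronglyMeasurable

lemma measurable_condAvg [SFinite ν] (hH : Measurable H) : Measurable (condAvg ν s H) :=
  (stronglyMeasurable_condAvg hH).measurable.mono (Filtration.le _ s) le_rfl

variable [Fintype ι] {μ : ι → Measure 𝒵} [∀ i, IsProbabilityMeasure (μ i)]

lemma integrable_condAvg (hH : Integrable H (Measure.pi μ)) :
    Integrable (condAvg (Measure.pi μ) s H) (Measure.pi μ) :=
  ((measurePreserving_piecewise s).integrable_comp_of_integrable hH).integral_prod_left

lemma setIntegral_condAvg (hH : Integrable H (Measure.pi μ)) {B : Set (ι → 𝒵)}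
    (hB : MeasurableSet[Filtration.piFinset s] B) :
    ∫ x in B, condAvg (Measure.pi μ) s H x ∂Measure.pi μ = ∫ x in B, H x ∂Measure.pi μ := by
  obtain ⟨C, hC, rfl⟩ := hB
  have hpw := measurePreserving_piecewise (μ := μ) s
  have hB : MeasurableSet (s.restrict ⁻¹' C) := Finset.measurable_restrict (X := fun _ => 𝒵) s hC
  have hpre : (fun p : (ι → 𝒵) × (ι → 𝒵) => s.piecewise p.1 p.2) ⁻¹' (s.restrict ⁻¹' C) =
      (s.restrict ⁻¹' C) ×ˢ Set.univ := by
    ext p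
    have : s.restrict (s.piecewise p.1 p.2) = s.restrict p.1 := by
      ext ⟨j, hj⟩; simp [hj]
    simp [this]
  have hint : Integrable (fun p : (ι → 𝒵) × (ι → 𝒵) => H (s.piecewise p.1 p.2))
      ((Measure.pi μ).prod (Measure.pi μ)) :=
    hpw.integrable_comp_of_integrable hH
  calc ∫ x in s.restrict ⁻¹' C, condAvg (Measure.pi μ) s H x ∂Measure.pi μ
      = ∫ p in (s.restrict ⁻¹' C) ×ˢ Set.univ, H (s.piecewise p.1 p.2)
          ∂(Measure.pi μ).prod (Measure.pi μ) := by
        rw [setIntegral_prod _ hint.integrableOn]; simp [condAvg]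
    _ = ∫ x in s.restrict ⁻¹' C, H x ∂Measure.pi μ := by
        rw [← hpre, hpw.setIntegral_preimage hH.aestronglyMeasurable hB]

lemma condExp_piFinset_ae_eq_condAvg (hHm : Measurable H) (hH : Integrable H (Measure.pi μ)) :
    (Measure.pi μ)[H | Filtration.piFinset s] =ᵐ[Measure.pi μ] condAvg (Measure.pi μ) s H :=
  (ae_eq_condExp_of_forall_setIntegral_eq (Filtration.le _ s) hH
    (fun _ _ _ => (integrable_condAvg hH).integrableOn)
    (fun _ hB _ => setIntegral_condAvg hH hB)
    (stronglyMeasurable_condAvg hHm).aestronglyMeasurable).symm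

end CondAvg

lemma condExp_comap_ae_eq_comp {X : Type*} {m : MeasurableSpace X} [mX : MeasurableSpace X]
    {P : Measure Ω} [IsFiniteMeasure P] {ν : Measure X} {T : Ω → X}
    (hT : MeasurePreserving T P ν) (hm : m ≤ mX) {g : X → ℝ} (hg : Integrable g ν) :
    P[g ∘ T | m.comap T] =ᵐ[P] ν[g | m] ∘ T := by
  have : IsFiniteMeasure ν := hT.map_eq ▸ inferInstance
  refine (ae_eq_condExp_of_forall_setIntegral_eq
    ((MeasurableSpace.comap_mono hm).trans hT.measurable.comap_le)
    (hT.integrable_comp_of_integrable hg)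
    (fun _ _ _ => (hT.integrable_comp_of_integrable integrable_condExp).integrableOn) ?_
    (stronglyMeasurable_condExp.comp_measurable (comap_measurable T)).aestronglyMeasurable).symm
  rintro _ ⟨B, hB, rfl⟩ -
  calc ∫ ω in T ⁻¹' B, ν[g | m] (T ω) ∂P
      = ∫ x in B, ν[g | m] x ∂ν :=
        hT.setIntegral_preimage integrable_condExp.aestronglyMeasurable (hm B hB)
    _ = ∫ x in B, g x ∂ν := setIntegral_condExp hm hg hB
    _ = ∫ ω in T ⁻¹' B, g (T ω) ∂P :=
        (hT.setIntegral_preimage hg.aestronglyMeasurable (hm B hB)).symm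

section DoubledSample

variable {α β : Type*}

def onLeft (f : (α → β) → ℝ) (x : α ⊕ α → β) : ℝ := f (x ∘ Sum.inl)

lemma measurable_onLeft [MeasurableSpace β] {f : (α → β) → ℝ} (hf : Measurable f) :
    Measurable (onLeft f) :=
  hf.comp (measurable_pi_lambda _ fun i => measurable_pi_apply (Sum.inl i))

variable [DecidableEq α]

def swapAt (k : α) : α ⊕ α ≃ α ⊕ α := Equiv.swap (Sum.inl k) (Sum.inr k)

lemma swapAt_inl_of_ne {i k : α} (h : i ≠ k) : swapAt k (Sum.inl i) = Sum.inl i :=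
  Equiv.swap_apply_of_ne_of_ne (by simpa using h) (by simp)

lemma swapAt_inr_of_ne {i k : α} (h : i ≠ k) : swapAt k (Sum.inr i) = Sum.inr i :=
  Equiv.swap_apply_of_ne_of_ne (by simp) (by simpa using h)

/-- `f(S) - f(S⁽ᵏ⁾)` read on the doubled sample `(S, S')`. -/
def diffAt (f : (α → β) → ℝ) (k : α) (x : α ⊕ α → β) : ℝ :=
  onLeft f x - onLeft f (x ∘ swapAt k)

lemma diffAt_comp_swapAt (f : (α → β) → ℝ) (k : α) (x : α ⊕ α → β) :
    diffAt f k (x ∘ swapAt k) = -diffAt f k x := by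
  have : x ∘ swapAt k ∘ swapAt k = x := by ext j; simp [swapAt]
  simp only [diffAt, Function.comp_assoc, this, neg_sub]

lemma measurable_diffAt [MeasurableSpace β] {f : (α → β) → ℝ} (hf : Measurable f) (k : α) :
    Measurable (diffAt f k) :=
  (measurable_onLeft hf).sub ((measurable_onLeft hf).comp
    (measurable_pi_lambda _ fun _ => measurable_pi_apply _))

lemma measurePreserving_swapAt [Fintype α] [MeasurableSpace β] {μ : α ⊕ α → Measure β}
    [∀ j, SigmaFinite (μ j)] (hμ : ∀ i, μ (Sum.inr i) = μ (Sum.inl i)) (k : α) :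
    MeasurePreserving (fun x : α ⊕ α → β => x ∘ swapAt k) (Measure.pi μ) (Measure.pi μ) := by
  refine measurePreserving_comp_equiv _ fun j => ?_
  rcases j with i | i <;> by_cases h : i = k
  · subst h; simp [swapAt, hμ]
  · rw [swapAt_inl_of_ne h]
  · subst h; simp [swapAt, hμ]
  · rw [swapAt_inr_of_ne h]

end DoubledSample

section Revealed

variable {n : ℕ} {β : Type*}

/-- The coordinates of `Z_1, …, Z_m` in the doubled sample. -/
def revealed (n m : ℕ) : Finset (Fin n ⊕ Fin n) :=
  (univ.filter fun i : Fin n => i.val < m).map Function.Embedding.inl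

@[simp] lemma inl_mem_revealed {m : ℕ} {i : Fin n} : Sum.inl i ∈ revealed n m ↔ i.val < m := by
  simp [revealed]

@[simp] lemma inr_notMem_revealed {m : ℕ} {i : Fin n} : Sum.inr i ∉ revealed n m := by
  simp [revealed]

lemma mem_revealed {m : ℕ} {j : Fin n ⊕ Fin n} :
    j ∈ revealed n m ↔ ∃ i : Fin n, i.val < m ∧ j = Sum.inl i := by
  rcases j with i | i <;> simp

lemma revealed_mono {m m' : ℕ} (h : m ≤ m') : revealed n m ⊆ revealed n m' := by
  intro j hj
  obtain ⟨i, hi, rfl⟩ := mem_revealed.mp hj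
  simpa using hi.trans_le h

lemma revealed_zero : revealed n 0 = ∅ := by
  ext j; rcases j with i | i <;> simp

lemma onLeft_piecewise_revealed_self (f : (Fin n → β) → ℝ) (x y : Fin n ⊕ Fin n → β) :
    onLeft f ((revealed n n).piecewise x y) = onLeft f x := by
  simp only [onLeft]
  congr 1 with i
  simp [i.isLt]

/-- Swapping `Z_k` with `Z'_k` turns "reveal `Z_1, …, Z_{k+1}`" into "reveal `Z_1, …, Z_k`". -/
lemma onLeft_piecewise_succ_comp_swapAt (f : (Fin n → β) → ℝ) (k : Fin n)
    (x y : Fin n ⊕ Fin n → β) :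
    onLeft f ((revealed n (k + 1)).piecewise x y ∘ swapAt k) =
      onLeft f ((revealed n k).piecewise x (y ∘ swapAt k)) := by
  simp only [onLeft]
  congr 1 with i
  by_cases hik : i = k
  · subst hik; simp [swapAt]
  · have hlt : i.val < k + 1 ↔ i.val < k := by
      have : i.val ≠ k.val := Fin.val_ne_of_ne hik
      omega
    simp only [Function.comp_apply, swapAt_inl_of_ne hik, Finset.piecewise, inl_mem_revealed, hlt]

end Revealed

section Martingale

variable {n : ℕ} {μ : Fin n ⊕ Fin n → Measure 𝒵} {f : (Fin n → 𝒵) → ℝ}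

/-- `E[f(S) | Z_1, …, Z_m]`, as a function of the doubled sample `(S, S')`. -/
noncomputable def doobMart (μ : Fin n ⊕ Fin n → Measure 𝒵) (f : (Fin n → 𝒵) → ℝ) (m : ℕ) :
    (Fin n ⊕ Fin n → 𝒵) → ℝ :=
  condAvg (Measure.pi μ) (revealed n m) (onLeft f)

/-- `E[(f(S) - f(S⁽ᵏ⁾))² | Z_1, …, Z_{k+1}]`, as a function of the doubled sample. -/
noncomputable def varTerm (μ : Fin n ⊕ Fin n → Measure 𝒵) (f : (Fin n → 𝒵) → ℝ) (k : Fin n) :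
    (Fin n ⊕ Fin n → 𝒵) → ℝ :=
  condAvg (Measure.pi μ) (revealed n (k + 1)) fun z => diffAt f k z ^ 2

noncomputable def logWeight (μ : Fin n ⊕ Fin n → Measure 𝒵) (f : (Fin n → 𝒵) → ℝ) (l c : ℝ)
    (m : ℕ) (x : Fin n ⊕ Fin n → 𝒵) : ℝ :=
  l * (doobMart μ f m x - c) - l ^ 2 / 2 * ∑ k : Fin n with k.val < m, varTerm μ f k x

lemma logWeight_congr {l c : ℝ} {m : ℕ} {x x' : Fin n ⊕ Fin n → 𝒵}
    (h : ∀ j ∈ revealed n m, x j = x' j) : logWeight μ f l c m x = logWeight μ f l c m x' := by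
  have hV : ∀ k ∈ univ.filter fun k : Fin n => k.val < m, varTerm μ f k x = varTerm μ f k x' :=
    fun k hk => condAvg_congr fun j hj =>
      h j (revealed_mono (Nat.succ_le_of_lt (mem_filter.mp hk).2) hj)
  simp only [logWeight, doobMart, condAvg_congr h, sum_congr rfl hV]

lemma logWeight_piecewise_of_le {l c : ℝ} {m m' : ℕ} (h : m ≤ m') (x y : Fin n ⊕ Fin n → 𝒵) :
    logWeight μ f l c m ((revealed n m').piecewise x y) = logWeight μ f l c m x :=
  logWeight_congr fun _ hj => piecewise_eq_of_mem _ x y (revealed_mono h hj)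

lemma logWeight_comp_swapAt {l c : ℝ} {m : ℕ} {k : Fin n} (h : m ≤ k) (x : Fin n ⊕ Fin n → 𝒵) :
    logWeight μ f l c m (x ∘ swapAt k) = logWeight μ f l c m x :=
  logWeight_congr fun _ hj => by
    obtain ⟨i, hi, rfl⟩ := mem_revealed.mp hj
    simp [swapAt_inl_of_ne (Fin.ne_of_val_ne (hi.trans_le h).ne)]

lemma logWeight_succ (l c : ℝ) (k : Fin n) (x : Fin n ⊕ Fin n → 𝒵) :
    logWeight μ f l c (k + 1) x = logWeight μ f l c k x +
      (l * (doobMart μ f (k + 1) x - doobMart μ f k x) - l ^ 2 / 2 * varTerm μ f k x) := by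
  have hfilter : (univ.filter fun j : Fin n => j.val < k.val + 1) =
      insert k (univ.filter fun j : Fin n => j.val < k.val) := by
    ext j; simp only [mem_filter, mem_univ, true_and, mem_insert, Fin.ext_iff]; omega
  rw [logWeight, logWeight, hfilter, sum_insert (by simp)]
  ring

lemma measurable_varTerm [∀ j, IsProbabilityMeasure (μ j)] (hf : Measurable f) (k : Fin n) :
    Measurable (varTerm μ f k) :=
  measurable_condAvg ((measurable_diffAt hf k).pow_const 2)

lemma measurable_logWeight [∀ j, IsProbabilityMeasure (μ j)] (hf : Measurable f) (l c : ℝ)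
    (m : ℕ) : Measurable (logWeight μ f l c m) := by
  have hV := measurable_varTerm (μ := μ) hf
  unfold logWeight doobMart
  have := measurable_condAvg (ν := Measure.pi μ) (s := revealed n m) (measurable_onLeft hf)
  fun_prop

variable [∀ j, IsProbabilityMeasure (μ j)]

lemma doobMart_eq_condAvg_comp_swapAt (hμ : ∀ i, μ (Sum.inr i) = μ (Sum.inl i))
    (hf : Measurable f) (k : Fin n) (x : Fin n ⊕ Fin n → 𝒵) :
    doobMart μ f k x =
      condAvg (Measure.pi μ) (revealed n (k + 1)) (fun z => onLeft f (z ∘ swapAt k)) x := by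
  simp only [doobMart, condAvg, onLeft_piecewise_succ_comp_swapAt]
  exact ((measurePreserving_swapAt hμ k).integral_comp_of_aestronglyMeasurable
    ((measurable_onLeft hf).comp (measurable_piecewise_prod _ |>.comp
      (measurable_const.prodMk measurable_id))).aestronglyMeasurable).symm

lemma doobMart_succ_sub_ae_eq (hμ : ∀ i, μ (Sum.inr i) = μ (Sum.inl i)) (hf : Measurable f)
    (hF : Integrable (onLeft f) (Measure.pi μ)) (k : Fin n) :
    ∀ᵐ x ∂Measure.pi μ, doobMart μ f (k + 1) x - doobMart μ f k x =
      condAvg (Measure.pi μ) (revealed n (k + 1)) (diffAt f k) x := by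
  have hFσ : Integrable (fun z => onLeft f (z ∘ swapAt k)) (Measure.pi μ) :=
    (measurePreserving_swapAt hμ k).integrable_comp_of_integrable hF
  filter_upwards [ae_integrable_piecewise (revealed n (k + 1)) hF,
    ae_integrable_piecewise (revealed n (k + 1)) hFσ] with x h₁ h₂
  rw [doobMart_eq_condAvg_comp_swapAt hμ hf, doobMart, condAvg, condAvg, condAvg,
    ← integral_sub h₁ h₂]
  rfl

lemma lintegral_exp_logWeight_succ_le (hμ : ∀ i, μ (Sum.inr i) = μ (Sum.inl i))
    (hf : Measurable f) (hF : MemLp (onLeft f) 2 (Measure.pi μ)) (l c : ℝ) (k : Fin n) :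
    ∫⁻ x, ENNReal.ofReal (exp (logWeight μ f l c (k + 1) x)) ∂Measure.pi μ ≤
      ∫⁻ x, ENNReal.ofReal (exp (logWeight μ f l c k x)) ∂Measure.pi μ := by
  set A := revealed n (k + 1)
  set Ψ : (Fin n ⊕ Fin n → 𝒵) → ℝ≥0∞ := fun x => ENNReal.ofReal (exp (logWeight μ f l c k x))
  set w : ℝ → ℝ≥0∞ := fun t => ENNReal.ofReal (exp (l * t - l ^ 2 / 2 * t ^ 2))
  have hd : MemLp (diffAt f k) 2 (Measure.pi μ) :=
    hF.sub (hF.comp_measurePreserving (measurePreserving_swapAt hμ k))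
  have hΨ : Measurable Ψ := by have := measurable_logWeight (μ := μ) hf l c k; fun_prop
  have hdm := measurable_diffAt hf k
  have hsplit : ∀ᵐ x ∂Measure.pi μ, ENNReal.ofReal (exp (logWeight μ f l c (k + 1) x)) =
      Ψ x * ENNReal.ofReal (exp (l * condAvg (Measure.pi μ) A (diffAt f k) x -
        l ^ 2 / 2 * varTerm μ f k x)) := by
    filter_upwards [doobMart_succ_sub_ae_eq hμ hf (hF.integrable one_le_two) k] with x hx
    rw [logWeight_succ, hx, exp_add, ENNReal.ofReal_mul (exp_pos _).le]
  have hjensen : ∀ᵐ x ∂Measure.pi μ, ENNReal.ofReal (exp (l * condAvg (Measure.pi μ) A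
      (diffAt f k) x - l ^ 2 / 2 * varTerm μ f k x)) ≤
        ∫⁻ y, w (diffAt f k (A.piecewise x y)) ∂Measure.pi μ := by
    filter_upwards [ae_integrable_piecewise A (hd.integrable one_le_two),
      ae_integrable_piecewise A hd.integrable_sq] with x h₁ h₂
    exact ofReal_exp_integral_le_lintegral h₁ h₂ l
  have hΨA : ∀ x y, Ψ (A.piecewise x y) = Ψ x := fun x y => by
    simp only [Ψ, A, logWeight_piecewise_of_le k.val.le_succ]
  have hΨσ : ∀ x, Ψ (x ∘ swapAt k) = Ψ x := fun x => by
    simp only [Ψ, logWeight_comp_swapAt le_rfl]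
  calc ∫⁻ x, ENNReal.ofReal (exp (logWeight μ f l c (k + 1) x)) ∂Measure.pi μ
      = ∫⁻ x, Ψ x * ENNReal.ofReal (exp (l * condAvg (Measure.pi μ) A (diffAt f k) x -
          l ^ 2 / 2 * varTerm μ f k x)) ∂Measure.pi μ := lintegral_congr_ae hsplit
    _ ≤ ∫⁻ x, Ψ x * ∫⁻ y, w (diffAt f k (A.piecewise x y)) ∂Measure.pi μ ∂Measure.pi μ :=
        lintegral_mono_ae (hjensen.mono fun x hx => by gcongr)
    _ = ∫⁻ x, ∫⁻ y, Ψ (A.piecewise x y) * w (diffAt f k (A.piecewise x y)) ∂Measure.pi μ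
          ∂Measure.pi μ := by
        refine lintegral_congr fun x => ?_
        simp only [hΨA]
        exact (lintegral_const_mul' (Ψ x) _ ENNReal.ofReal_ne_top).symm
    _ = ∫⁻ z, Ψ z * w (diffAt f k z) ∂Measure.pi μ :=
        lintegral_lintegral_piecewise A (hΨ.mul ((by fun_prop : Measurable w).comp hdm))
    _ ≤ ∫⁻ z, Ψ z ∂Measure.pi μ :=
        lintegral_mul_ofReal_exp_le_of_antisymm (measurePreserving_swapAt hμ k) hΨ hΨσ hdm
          (diffAt_comp_swapAt f k) l

theorem lintegral_exp_le_one_pi (hμ : ∀ i, μ (Sum.inr i) = μ (Sum.inl i)) (hf : Measurable f)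
    (hF : MemLp (onLeft f) 2 (Measure.pi μ)) (l : ℝ) :
    ∫⁻ x, ENNReal.ofReal (exp (l * (onLeft f x - ∫ y, onLeft f y ∂Measure.pi μ) -
      l ^ 2 / 2 * ∑ k, varTerm μ f k x)) ∂Measure.pi μ ≤ 1 := by
  set c := ∫ y, onLeft f y ∂Measure.pi μ
  have hinit : ∫⁻ x, ENNReal.ofReal (exp (logWeight μ f l c 0 x)) ∂Measure.pi μ = 1 := by
    simp [logWeight, doobMart, revealed_zero, condAvg_empty, c]
  have hstep : ∀ m ≤ n, ∫⁻ x, ENNReal.ofReal (exp (logWeight μ f l c m x)) ∂Measure.pi μ ≤ 1 := by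
    intro m hm
    induction m with
    | zero => exact hinit.le
    | succ m ih =>
      exact (lintegral_exp_logWeight_succ_le hμ hf hF l c ⟨m, hm⟩).trans (ih (by omega))
  refine (le_of_eq (lintegral_congr fun x => ?_)).trans (hstep n le_rfl)
  rw [logWeight, doobMart, condAvg_eq_self (onLeft_piecewise_revealed_self f x)]
  simp

end Martingale

section Transfer

variable {X β : Type*} [MeasurableSpace β] {n : ℕ} {Z Z' : Fin n → X → β}

lemma filt_eq_comap_revealed (m : ℕ) :
    filt n Z m =
      (Filtration.piFinset (revealed n m)).comap
        fun x (j : Fin n ⊕ Fin n) => Sum.elim Z Z' j x := by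
  set A := revealed n m
  refine le_antisymm (iSup₂_le fun i hi => ?_) ?_
  · have hcoord : Measurable[Filtration.piFinset A] fun y : Fin n ⊕ Fin n → β => y (Sum.inl i) :=
      (measurable_pi_apply (X := fun _ : A => β) ⟨Sum.inl i, by simpa [A] using hi⟩).comp
        (comap_measurable _)
    exact (hcoord.comp (comap_measurable fun x (j : Fin n ⊕ Fin n) => Sum.elim Z Z' j x)).comap_le
  · refine (MeasurableSpace.comap_comp).trans_le (measurable_iff_comap_le.mp ?_)
    refine @measurable_pi_lambda _ _ _ (filt n Z m) _ _ fun ⟨j, hj⟩ => ?_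
    obtain ⟨i, hi, rfl⟩ := mem_revealed.mp hj
    exact Measurable.of_comap_le (le_iSup₂ (f := fun i (_ : i.val < m) =>
      MeasurableSpace.comap (Z i) inferInstance) i hi)

end Transfer

lemma sampleRep_eq {X β : Type*} {n : ℕ} (Z Z' : Fin n → X → β) (k : Fin n) (x : X) :
    sampleRep n Z Z' k x = (fun j => Sum.elim Z Z' j x) ∘ swapAt k ∘ Sum.inl := by
  ext i
  by_cases h : i = k
  · subst h; simp [sampleRep, swapAt]
  · simp [sampleRep, sample, swapAt_inl_of_ne h, Function.update_of_ne h]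

lemma condExp_sq_sub_sampleRep_ae_eq {P : Measure Ω} [IsProbabilityMeasure P] {n : ℕ}
    {Z Z' : Fin n → Ω → 𝒵} {μ : Fin n ⊕ Fin n → Measure 𝒵} [∀ j, IsProbabilityMeasure (μ j)]
    (hT : MeasurePreserving (fun ω j => Sum.elim Z Z' j ω) P (Measure.pi μ))
    (hμ : ∀ i, μ (Sum.inr i) = μ (Sum.inl i)) {f : (Fin n → 𝒵) → ℝ} (hf : Measurable f)
    (hF : MemLp (onLeft f) 2 (Measure.pi μ)) (k : Fin n) :
    P[fun ω => (f (sample n Z ω) - f (sampleRep n Z Z' k ω)) ^ 2 | filt n Z (k + 1)] =ᵐ[P]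
      fun ω => varTerm μ f k fun j => Sum.elim Z Z' j ω := by
  have hd2 : Integrable (fun z => diffAt f k z ^ 2) (Measure.pi μ) :=
    (hF.sub (hF.comp_measurePreserving (measurePreserving_swapAt hμ k))).integrable_sq
  have hcomp : (fun ω => (f (sample n Z ω) - f (sampleRep n Z Z' k ω)) ^ 2) =
      (fun z => diffAt f k z ^ 2) ∘ fun ω j => Sum.elim Z Z' j ω := by
    ext ω; simp only [Function.comp_apply, diffAt, onLeft, sampleRep_eq]; rfl
  rw [hcomp, filt_eq_comap_revealed (Z' := Z')]
  exact (condExp_comap_ae_eq_comp hT (Filtration.le _ _) hd2).trans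
    (hT.quasiMeasurePreserving.ae_eq_comp (condExp_piFinset_ae_eq_condAvg
      ((measurable_diffAt hf k).pow_const 2) hd2))

lemma varEst_ae_eq {P : Measure Ω} [IsProbabilityMeasure P] {n : ℕ} {Z Z' : Fin n → Ω → 𝒵}
    {μ : Fin n ⊕ Fin n → Measure 𝒵} [∀ j, IsProbabilityMeasure (μ j)]
    (hT : MeasurePreserving (fun ω j => Sum.elim Z Z' j ω) P (Measure.pi μ))
    (hμ : ∀ i, μ (Sum.inr i) = μ (Sum.inl i)) {f : (Fin n → 𝒵) → ℝ} (hf : Measurable f)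
    (hF : MemLp (onLeft f) 2 (Measure.pi μ)) :
    varEst P n Z Z' f =ᵐ[P] fun ω => ∑ k, varTerm μ f k fun j => Sum.elim Z Z' j ω := by
  filter_upwards [ae_all_iff.2 fun k => condExp_sq_sub_sampleRep_ae_eq hT hμ hf hF k] with ω hω
  exact sum_congr rfl fun k _ => hω k

lemma gap_eq {P : Measure Ω} {n : ℕ} {Z Z' : Fin n → Ω → 𝒵} {μ : Fin n ⊕ Fin n → Measure 𝒵}
    (hT : MeasurePreserving (fun ω j => Sum.elim Z Z' j ω) P (Measure.pi μ))
    {f : (Fin n → 𝒵) → ℝ} (hf : Measurable f) (ω : Ω) :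
    gap P n Z f ω = onLeft f (fun j => Sum.elim Z Z' j ω) - ∫ x, onLeft f x ∂Measure.pi μ :=
  congrArg _ (hT.integral_comp_of_aestronglyMeasurable (measurable_onLeft hf).aestronglyMeasurable)

/-- `(Δ, √V)` is a canonical pair:
for every `λ ∈ ℝ`, `E[exp(λ·Δ − (λ²/2)·V)] ≤ 1`. -/
theorem gap_varEst_canonical_pair
    (P : Measure Ω) [IsProbabilityMeasure P]
    (n : ℕ) (Z Z' : Fin n → Ω → 𝒵)
    (hZ : ∀ i, Measurable (Z i)) (hZ' : ∀ i, Measurable (Z' i))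
    (hindep : iIndepFun (Sum.elim Z Z') P)
    (hcopy : ∀ i, IdentDistrib (Z' i) (Z i) P P)
    (f : (Fin n → 𝒵) → ℝ) (hf : Measurable f)
    (hsq : MemLp (fun ω => f (sample n Z ω)) 2 P)
    (l : ℝ) :
    ∫⁻ ω, ENNReal.ofReal
        (Real.exp (l * gap P n Z f ω - l ^ 2 / 2 * varEst P n Z Z' f ω)) ∂P ≤ 1 := by
  set μ : Fin n ⊕ Fin n → Measure 𝒵 := fun j => P.map (Sum.elim Z Z' j)
  have hW : ∀ j, Measurable (Sum.elim Z Z' j) := Sum.forall.2 ⟨hZ, hZ'⟩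
  have : ∀ j, IsProbabilityMeasure (μ j) :=
    fun j => Measure.isProbabilityMeasure_map (hW j).aemeasurable
  have hT : MeasurePreserving (fun ω j => Sum.elim Z Z' j ω) P (Measure.pi μ) :=
    ⟨measurable_pi_lambda _ hW, hindep.map_fun_eq_pi_map fun j => (hW j).aemeasurable⟩
  have hμ : ∀ i, μ (Sum.inr i) = μ (Sum.inl i) := fun i => (hcopy i).map_eq
  have hF : MemLp (onLeft f) 2 (Measure.pi μ) := by
    rw [← hT.map_eq]
    exact (memLp_map_measure_iff (hT.map_eq ▸ (measurable_onLeft hf).aestronglyMeasurable)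
      hT.measurable.aemeasurable).2 hsq
  set G : (Fin n ⊕ Fin n → 𝒵) → ℝ≥0∞ := fun x => ENNReal.ofReal (exp (l * (onLeft f x -
    ∫ y, onLeft f y ∂Measure.pi μ) - l ^ 2 / 2 * ∑ k, varTerm μ f k x))
  have hG : Measurable G := by
    have := measurable_onLeft hf
    have := measurable_varTerm (μ := μ) hf
    fun_prop
  calc ∫⁻ ω, ENNReal.ofReal (exp (l * gap P n Z f ω - l ^ 2 / 2 * varEst P n Z Z' f ω)) ∂P
      = ∫⁻ ω, G (fun j => Sum.elim Z Z' j ω) ∂P :=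
        lintegral_congr_ae ((varEst_ae_eq hT hμ hf hF).mono fun ω hω => by
          simp only [G, gap_eq hT hf, hω])
    _ = ∫⁻ x, G x ∂Measure.pi μ := hT.lintegral_comp hG
    _ ≤ 1 := lintegral_exp_le_one_pi hμ hf hF l
end

section
/- If X is a real random variable such that X and −X have the same distribution, then for every λ ∈ ℝ one has E[exp(λ·X − (λ²/2)·X²)] ≤ 1. -/
/-!
Write `g y = exp (y - y² / 2)`. Since `cosh y ≤ exp (y² / 2)`, we have
`g y + g (-y) = 2 cosh y · exp (-y² / 2) ≤ 2` for every `y`. For a symmetric `X`,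
`E[g (l X)] = E[g (-l X)]`, so `E[g (l X)]` is half of `E[g (l X) + g (-l X)] ≤ 2`.
-/

open MeasureTheory ProbabilityTheory Real

lemma exp_sub_sq_div_two_le (y : ℝ) : exp (y - y ^ 2 / 2) ≤ exp (1 / 2) :=
  exp_le_exp.mpr (by nlinarith [sq_nonneg (y - 1)])

lemma exp_sub_sq_div_two_add_exp_neg_sub_sq_div_two_le_two (y : ℝ) :
    exp (y - y ^ 2 / 2) + exp (-y - y ^ 2 / 2) ≤ 2 := by
  have hsum : exp (y - y ^ 2 / 2) + exp (-y - y ^ 2 / 2) = 2 * cosh y * exp (-(y ^ 2 / 2)) := by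
    rw [cosh_eq, sub_eq_add_neg, sub_eq_add_neg, exp_add, exp_add]
    ring
  have hcancel : exp (y ^ 2 / 2) * exp (-(y ^ 2 / 2)) = 1 := by
    rw [← exp_add, add_neg_cancel, exp_zero]
  rw [hsum]
  nlinarith [cosh_le_exp_half_sq y, exp_pos (-(y ^ 2 / 2))]

lemma ProbabilityTheory.IdentDistrib.integral_comp_le_of_add_comp_neg_le
    {Ω : Type*} [MeasurableSpace Ω] {P : Measure Ω} [IsProbabilityMeasure P] {X : Ω → ℝ}
    (hsymm : IdentDistrib X (fun ω => -X ω) P P) {f : ℝ → ℝ} (hf : Measurable f)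
    (hint : Integrable (fun ω => f (X ω)) P) {c : ℝ} (hc : ∀ x, f x + f (-x) ≤ 2 * c) :
    ∫ ω, f (X ω) ∂P ≤ c := by
  have hcomp := hsymm.comp hf
  have hint_neg : Integrable (fun ω => f (-X ω)) P := hcomp.integrable_snd hint
  have hsum : ∫ ω, (f (X ω) + f (-X ω)) ∂P ≤ 2 * c := by
    calc ∫ ω, (f (X ω) + f (-X ω)) ∂P ≤ ∫ _, 2 * c ∂P :=
          integral_mono (hint.add hint_neg) (integrable_const _) fun ω => hc (X ω)
      _ = 2 * c := by simp
  have heq : ∫ ω, f (X ω) ∂P = ∫ ω, f (-X ω) ∂P := hcomp.integral_eq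
  rw [integral_add hint hint_neg, ← heq] at hsum
  linarith

theorem symmetric_rv_canonical_general
    {Ω : Type*} [MeasurableSpace Ω] (P : Measure Ω) [IsProbabilityMeasure P]
    (X : Ω → ℝ)
    (hsymm : IdentDistrib X (fun ω => -X ω) P P) (l : ℝ) :
    ∫ ω, Real.exp (l * X ω - l ^ 2 / 2 * (X ω) ^ 2) ∂P ≤ 1 := by
  have hexponent : ∀ x, l * x - l ^ 2 / 2 * x ^ 2 = l * x - (l * x) ^ 2 / 2 := fun x => by ring
  have hm : Measurable fun x => exp (l * x - l ^ 2 / 2 * x ^ 2) := by fun_prop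
  have hint : Integrable (fun ω => exp (l * X ω - l ^ 2 / 2 * X ω ^ 2)) P := by
    refine Integrable.of_bound (hm.comp_aemeasurable hsymm.aemeasurable_fst).aestronglyMeasurable
      (exp (1 / 2)) (ae_of_all _ fun ω => ?_)
    rw [norm_of_nonneg (exp_pos _).le, hexponent]
    exact exp_sub_sq_div_two_le _
  refine hsymm.integral_comp_le_of_add_comp_neg_le hm hint fun x => ?_
  rw [hexponent, hexponent, mul_one, mul_neg, neg_sq]
  exact exp_sub_sq_div_two_add_exp_neg_sub_sq_div_two_le_two (l * x)

/-- If a real random variable `X` has the same distribution as `-X`,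
then for every `λ ∈ ℝ`, `E[exp(λ·X − (λ²/2)·X²)] ≤ 1`. -/
theorem symmetric_rv_canonical
    {Ω : Type*} [MeasurableSpace Ω] (P : Measure Ω) [IsProbabilityMeasure P]
    (X : Ω → ℝ) (hX : Measurable X)
    (hsymm : IdentDistrib X (fun ω => -X ω) P P) (l : ℝ) :
    ∫ ω, Real.exp (l * X ω - l ^ 2 / 2 * (X ω) ^ 2) ∂P ≤ 1 :=
  symmetric_rv_canonical_general P X hsymm l
end
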